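/- Let n ∈ ℕ be even and positive, x_0 ∈ ℝ, h > 0, and x_k = x_0 + k·h for k = 0, ..., n. Let u : ℝ → ℝ be (n+1) times continuously differentiable with ‖u^{(n+1)}‖_∞ ≤ C_u, let e : ℝ → ℝ be bounded with ‖e‖_∞ < ε, and set ũ = u + e. Then |u'(x_{n/2}) − p_n'(ũ, x_{n/2})| ≤ h^n · C_u · ((n/2)!)² / (n+1)! + (ε/h) · Σ_{k=0, k≠n/2}^{n} |Π_{i=0, i≠k, i≠n/2}^{n} (n/2 − i)| / |Π_{i=0, i≠k}^{n} (k − i)|. -/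

import Mathlib

open Finset

/-- The `k`-th Lagrange basis polynomial `L_{n,k}` for the equispaced nodes
`x_i = x₀ + i·h`, `i = 0, …, n`:  `L_{n,k}(x) = Π_{i ≠ k} (x − x_i)/(x_k − x_i)`. -/
noncomputable def lagrangeBasis (n : ℕ) (x₀ h : ℝ) (k : ℕ) (x : ℝ) : ℝ :=
  ∏ i ∈ (Finset.range (n + 1)).erase k,
    (x - (x₀ + (i : ℝ) * h)) / ((x₀ + (k : ℝ) * h) - (x₀ + (i : ℝ) * h))

/-- The Lagrange interpolating polynomial `p_n(f, x) = Σ_{k=0}^{n} f(x_k) · L_{n,k}(x)`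
of `f` at the equispaced nodes `x_k = x₀ + k·h`. -/
noncomputable def lagrangeInterp (n : ℕ) (x₀ h : ℝ) (f : ℝ → ℝ) (x : ℝ) : ℝ :=
  ∑ k ∈ Finset.range (n + 1), f (x₀ + (k : ℝ) * h) * lagrangeBasis n x₀ h k x

open Finset Polynomial

lemma derivative_finset_prod {ι : Type*} [DecidableEq ι] (s : Finset ι) (f : ι → ℝ[X]) :
    derivative (∏ i ∈ s, f i) = ∑ b ∈ s, (∏ a ∈ s.erase b, f a) * derivative (f b) := by
  induction s using Finset.induction with
  | empty => simp
  | insert j s hnotmem ih =>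
    rw [Finset.prod_insert hnotmem, derivative_mul, Finset.sum_insert hnotmem,
      Finset.erase_insert hnotmem, ih, Finset.mul_sum]
    congr 1
    · exact mul_comm _ _
    · refine Finset.sum_congr rfl fun b hb => ?_
      rw [Finset.erase_insert_of_ne (by rintro rfl; exact hnotmem hb),
        Finset.prod_insert (fun h => hnotmem (Finset.mem_of_mem_erase h)), mul_assoc]

lemma iteratedDeriv_polyeval (p : ℝ[X]) (k : ℕ) :
    iteratedDeriv k (fun x => p.eval x) = fun x => (derivative^[k] p).eval x := by
  induction k with
  | zero => simp
  | succ k ih =>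
    rw [iteratedDeriv_succ, ih]
    funext x
    rw [Function.iterate_succ_apply']
    exact Polynomial.deriv (p := derivative^[k] p)

lemma iterated_rolle (m : ℕ) (f : ℝ → ℝ) (hf : ContDiff ℝ m f)
    (s : Finset ℝ) (hs : m < s.card) (hz : ∀ x ∈ s, f x = 0) :
    ∃ ξ, iteratedDeriv m f ξ = 0 := by
  induction m generalizing f s with
  | zero =>
    obtain ⟨x, hx⟩ := Finset.card_pos.mp hs
    exact ⟨x, by simpa using hz x hx⟩
  | succ m ih =>
    have hcast : ((m + 1 : ℕ) : WithTop ℕ∞) = (m : WithTop ℕ∞) + 1 := by push_cast; ring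
    rw [hcast, contDiff_succ_iff_deriv] at hf
    obtain ⟨hdiff, -, hf'⟩ := hf
    have ht : ∀ i : ℕ, i < s.card → True := fun _ _ => trivial
    set t : ℕ → ℝ := fun i => if h : i < s.card then (s.orderIsoOfFin rfl ⟨i, h⟩ : ℝ) else 0 with ht_def
    have tmem : ∀ i (h : i < s.card), t i ∈ s := by
      intro i h; simp only [ht_def, dif_pos h]; exact (s.orderIsoOfFin rfl ⟨i, h⟩).2
    have tmono : ∀ i j, i < j → (h : j < s.card) → t i < t j := by
      intro i j hij h
      have hi : i < s.card := hij.trans h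
      simp only [ht_def, dif_pos h, dif_pos hi]
      exact Subtype.coe_lt_coe.mpr ((s.orderIsoOfFin rfl).strictMono (by exact hij))
    have key : ∀ i, i ≤ m → ∃ z, z ∈ Set.Ioo (t i) (t (i+1)) ∧ deriv f z = 0 := by
      intro i hi
      have h1 : i + 1 < s.card := by omega
      obtain ⟨c, hc, hc0⟩ := exists_deriv_eq_zero (tmono i (i+1) (by omega) h1)
        (hdiff.continuous.continuousOn)
        (by rw [hz _ (tmem i (by omega)), hz _ (tmem (i+1) h1)])
      exact ⟨c, hc, hc0⟩
    choose z hzIoo hz0 using fun i : ℕ => fun h : i ≤ m => key i h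
    set Z : ℕ → ℝ := fun i => if h : i ≤ m then z i h else 0 with hZ
    have Zmono : ∀ i j, i < j → j ≤ m → Z i < Z j := by
      intro i j hij hj
      have hi : i ≤ m := by omega
      simp only [hZ, dif_pos hi, dif_pos hj]
      calc z i hi < t (i+1) := (hzIoo i hi).2
        _ ≤ t j := by
            rcases eq_or_lt_of_le (show i + 1 ≤ j by omega) with h | h
            · rw [h]
            · exact (tmono _ _ h (by omega)).le
        _ < z j hj := (hzIoo j hj).1
    have hinj : Set.InjOn Z (Finset.range (m+1) : Set ℕ) := by
      intro a ha b hb hab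
      simp only [Finset.coe_range, Set.mem_Iio] at ha hb
      by_contra hne
      rcases lt_or_gt_of_ne hne with h | h
      · exact absurd hab (Zmono a b h (by omega)).ne
      · exact absurd hab.symm (Zmono b a h (by omega)).ne
    obtain ⟨ξ, hξ⟩ := ih (deriv f) hf' ((Finset.range (m+1)).image Z)
      (by rw [Finset.card_image_of_injOn hinj, Finset.card_range]; omega)
      (by
        intro x hx
        obtain ⟨i, hi, rfl⟩ := Finset.mem_image.mp hx
        have hi' : i ≤ m := by simpa using Nat.lt_succ_iff.mp (Finset.mem_range.mp hi)
        simp only [hZ, dif_pos hi']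
        exact hz0 i hi')
    exact ⟨ξ, by rw [iteratedDeriv_succ']; exact hξ⟩

open Finset Polynomial

namespace CFD
variable (n : ℕ) (x₀ h : ℝ)

noncomputable def c (i : ℕ) : ℝ := x₀ + (i : ℝ) * h

noncomputable def N (k : ℕ) : ℝ[X] := ∏ i ∈ (Finset.range (n+1)).erase k, (X - Polynomial.C (c x₀ h i))

noncomputable def D (k : ℕ) : ℝ := ∏ i ∈ (Finset.range (n+1)).erase k, (c x₀ h k - c x₀ h i)

lemma c_sub (k i : ℕ) : c x₀ h k - c x₀ h i = ((k : ℝ) - (i : ℝ)) * h := by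
  simp [c]; ring

lemma D_eq (k : ℕ) (hk : k ∈ Finset.range (n+1)) :
    D n x₀ h k = h ^ n * ∏ i ∈ (Finset.range (n+1)).erase k, ((k : ℝ) - (i : ℝ)) := by
  unfold D
  have hcard : ((Finset.range (n+1)).erase k).card = n := by
    rw [Finset.card_erase_of_mem hk, Finset.card_range]; omega
  rw [show h ^ n = ∏ _i ∈ (Finset.range (n+1)).erase k, h by
      rw [Finset.prod_const, hcard], ← Finset.prod_mul_distrib]
  exact Finset.prod_congr rfl fun i _ => by rw [c_sub]; ring

lemma prod_sub_ne_zero (k : ℕ) :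
    ∏ i ∈ (Finset.range (n+1)).erase k, ((k : ℝ) - (i : ℝ)) ≠ 0 := by
  refine Finset.prod_ne_zero_iff.mpr fun i hi => ?_
  have : i ≠ k := Finset.ne_of_mem_erase hi
  have : (i : ℝ) ≠ (k : ℝ) := by exact_mod_cast this
  intro hc
  exact this (sub_eq_zero.mp hc).symm

lemma D_ne_zero (hh : 0 < h) (k : ℕ) (hk : k ∈ Finset.range (n+1)) : D n x₀ h k ≠ 0 := by
  rw [D_eq n x₀ h k hk]
  exact mul_ne_zero (pow_ne_zero _ hh.ne') (prod_sub_ne_zero n k)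

lemma basis_eq (k : ℕ) (x : ℝ) :
    lagrangeBasis n x₀ h k x = (N n x₀ h k).eval x / D n x₀ h k := by
  unfold lagrangeBasis N D c
  rw [Finset.prod_div_distrib, Polynomial.eval_prod]
  congr 1
  exact Finset.prod_congr rfl fun i _ => by simp

noncomputable def P (f : ℝ → ℝ) : ℝ[X] :=
  ∑ k ∈ Finset.range (n+1), Polynomial.C (f (c x₀ h k) / D n x₀ h k) * N n x₀ h k

lemma interp_eq (f : ℝ → ℝ) :
    lagrangeInterp n x₀ h f = fun x => (P n x₀ h f).eval x := by
  funext x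
  unfold lagrangeInterp P
  rw [Polynomial.eval_finset_sum]
  refine Finset.sum_congr rfl fun k _ => ?_
  rw [basis_eq, Polynomial.eval_mul, Polynomial.eval_C]
  show f (x₀ + (k:ℝ)*h) * (_ / _) = _
  rw [show x₀ + (k:ℝ)*h = c x₀ h k from rfl]
  ring

lemma natDegree_N_le (k : ℕ) (hk : k ∈ Finset.range (n+1)) : (N n x₀ h k).natDegree ≤ n := by
  unfold N
  refine le_trans (Polynomial.natDegree_prod_le _ _) ?_
  have h1 : ∑ i ∈ (Finset.range (n+1)).erase k, (X - Polynomial.C (c x₀ h i)).natDegree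
      ≤ ∑ _i ∈ (Finset.range (n+1)).erase k, 1 :=
    Finset.sum_le_sum fun i _ => Polynomial.natDegree_X_sub_C_le _
  refine le_trans h1 ?_
  rw [Finset.sum_const, smul_eq_mul, mul_one, Finset.card_erase_of_mem hk, Finset.card_range]
  omega

lemma natDegree_P_le (f : ℝ → ℝ) : (P n x₀ h f).natDegree ≤ n := by
  unfold P
  exact Polynomial.natDegree_sum_le_of_forall_le _ _ fun k hk =>
    le_trans (Polynomial.natDegree_C_mul_le _ _) (natDegree_N_le n x₀ h k hk)

lemma eval_N_self (k : ℕ) : (N n x₀ h k).eval (c x₀ h k) = D n x₀ h k := by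
  unfold N D
  rw [Polynomial.eval_prod]
  simp

lemma eval_N_other (k j : ℕ) (hj : j ∈ Finset.range (n+1)) (hjk : j ≠ k) :
    (N n x₀ h k).eval (c x₀ h j) = 0 := by
  unfold N
  rw [Polynomial.eval_prod]
  refine Finset.prod_eq_zero (Finset.mem_erase.mpr ⟨hjk, hj⟩) ?_
  simp

lemma eval_P_node (hh : 0 < h) (f : ℝ → ℝ) (j : ℕ) (hj : j ∈ Finset.range (n+1)) :
    (P n x₀ h f).eval (c x₀ h j) = f (c x₀ h j) := by
  unfold P
  rw [Polynomial.eval_finset_sum]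
  rw [Finset.sum_eq_single j]
  · rw [Polynomial.eval_mul, Polynomial.eval_C, eval_N_self n x₀ h j,
      div_mul_cancel₀ _ (D_ne_zero n x₀ h hh j hj)]
  · intro k hk hkj
    rw [Polynomial.eval_mul, eval_N_other n x₀ h k j hj (Ne.symm hkj), mul_zero]
  · intro hj'; exact absurd hj hj'

end CFD

namespace CFD
open Finset Polynomial
variable (n : ℕ) (x₀ h : ℝ)

lemma poly_contDiff (p : ℝ[X]) (k : WithTop ℕ∞) : ContDiff ℝ k fun x => p.eval x := by
  have h : (fun x : ℝ => p.eval x)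
      = fun x => ∑ i ∈ Finset.range (p.natDegree + 1), p.coeff i * x ^ i := by
    funext x; exact Polynomial.eval_eq_sum_range _
  rw [h]
  exact ContDiff.sum fun i _ => contDiff_const.mul (contDiff_id.pow i)

lemma my_iteratedDeriv_sub {f g : ℝ → ℝ} {k : ℕ} (hf : ContDiff ℝ k f) (hg : ContDiff ℝ k g)
    (x : ℝ) :
    iteratedDeriv k (fun y => f y - g y) x = iteratedDeriv k f x - iteratedDeriv k g x := by
  rw [← iteratedDerivWithin_univ, ← iteratedDerivWithin_univ, ← iteratedDerivWithin_univ]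
  exact iteratedDerivWithin_sub (Set.mem_univ x) uniqueDiffOn_univ hf.contDiffWithinAt hg.contDiffWithinAt

lemma iterate_deriv_add (p q : ℝ[X]) (k : ℕ) :
    Polynomial.derivative^[k] (p + q) =
      Polynomial.derivative^[k] p + Polynomial.derivative^[k] q := by
  induction k generalizing p q with
  | zero => simp
  | succ k ih => rw [Function.iterate_succ_apply, Function.iterate_succ_apply,
      Function.iterate_succ_apply, Polynomial.derivative_add, ih]

noncomputable def W : ℝ[X] := ∏ i ∈ Finset.range (n+1), (X - Polynomial.C (c x₀ h i))

lemma W_monic : (W n x₀ h).Monic :=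
  Polynomial.monic_prod_of_monic _ _ fun i _ => Polynomial.monic_X_sub_C _

lemma W_natDegree : (W n x₀ h).natDegree = n + 1 := by
  unfold W
  rw [Polynomial.natDegree_prod _ _ fun i _ => Polynomial.X_sub_C_ne_zero _]
  simp

lemma eval_W_node (j : ℕ) (hj : j ∈ Finset.range (n+1)) : (W n x₀ h).eval (c x₀ h j) = 0 := by
  unfold W
  rw [Polynomial.eval_prod]
  exact Finset.prod_eq_zero hj (by simp)

lemma iterate_derivative_W :
    Polynomial.derivative^[n+1] (W n x₀ h) = Polynomial.C (((n+1).factorial : ℕ) : ℝ) := by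
  have h1 : W n x₀ h = (W n x₀ h - X^(n+1)) + X^(n+1) := by ring
  have hq : Polynomial.derivative^[n+1] (W n x₀ h - X^(n+1)) = 0 := by
    by_cases h0 : W n x₀ h - X^(n+1) = (0 : ℝ[X])
    · rw [h0]; simp
    · refine Polynomial.iterate_derivative_eq_zero ?_
      rw [Polynomial.natDegree_lt_iff_degree_lt h0]
      have hd : (W n x₀ h).degree = ((n+1 : ℕ) : WithBot ℕ) := by
        rw [Polynomial.degree_eq_natDegree (W_monic n x₀ h).ne_zero, W_natDegree]
      have hdd : (W n x₀ h).degree = ((X : ℝ[X])^(n+1)).degree := by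
        rw [hd, Polynomial.degree_X_pow]
      have hlc : (W n x₀ h).leadingCoeff = ((X : ℝ[X])^(n+1)).leadingCoeff := by
        rw [(W_monic n x₀ h).leadingCoeff, Polynomial.leadingCoeff_X_pow]
      have := Polynomial.degree_sub_lt hdd (W_monic n x₀ h).ne_zero hlc
      rwa [hd] at this
  rw [h1, iterate_deriv_add, hq, zero_add,
    Polynomial.iterate_derivative_X_pow_eq_C_mul (n+1) (n+1), Nat.descFactorial_self]
  simp

lemma eval_derivative_W (j : ℕ) (hj : j ∈ Finset.range (n+1)) :
    (Polynomial.derivative (W n x₀ h)).eval (c x₀ h j) = D n x₀ h j := by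
  unfold W
  rw [derivative_finset_prod, Polynomial.eval_finset_sum]
  rw [Finset.sum_eq_single j]
  · rw [Polynomial.eval_mul, Polynomial.derivative_X_sub_C, Polynomial.eval_one, mul_one,
      Polynomial.eval_prod]
    unfold D
    exact Finset.prod_congr rfl fun a _ => by simp
  · intro b hb hbj
    rw [Polynomial.eval_mul, Polynomial.eval_prod]
    rw [Finset.prod_eq_zero (Finset.mem_erase.mpr ⟨Ne.symm hbj, hj⟩) (by simp), zero_mul]
  · intro hj'; exact absurd hj hj'

lemma eval_derivative_N_ne (k j : ℕ) (hj : j ∈ Finset.range (n+1)) (hkj : j ≠ k) :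
    (Polynomial.derivative (N n x₀ h k)).eval (c x₀ h j) =
      ∏ a ∈ ((Finset.range (n+1)).erase k).erase j, (c x₀ h j - c x₀ h a) := by
  unfold N
  rw [derivative_finset_prod, Polynomial.eval_finset_sum]
  rw [Finset.sum_eq_single j]
  · rw [Polynomial.eval_mul, Polynomial.derivative_X_sub_C, Polynomial.eval_one, mul_one,
      Polynomial.eval_prod]
    exact Finset.prod_congr rfl fun a _ => by simp
  · intro b hb hbj
    rw [Polynomial.eval_mul, Polynomial.eval_prod]
    rw [Finset.prod_eq_zero
      (Finset.mem_erase.mpr ⟨Ne.symm hbj, Finset.mem_erase.mpr ⟨hkj, hj⟩⟩) (by simp), zero_mul]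
  · intro hj'; exact absurd (Finset.mem_erase.mpr ⟨hkj, hj⟩) hj'

lemma eval_derivative_N_self (hh : 0 < h) (hn : Even n) (hpos : 0 < n) :
    (Polynomial.derivative (N n x₀ h (n/2))).eval (c x₀ h (n/2)) = 0 := by
  obtain ⟨r, hr⟩ := hn
  set m := n / 2 with hm
  have hm2 : n = m + m := by omega
  have hmmem : m ∈ Finset.range (n+1) := by simp [hm]; omega
  unfold N
  rw [derivative_finset_prod, Polynomial.eval_finset_sum]
  have hterm : ∀ b ∈ (Finset.range (n+1)).erase m,
      Polynomial.eval (c x₀ h m)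
        ((∏ a ∈ ((Finset.range (n+1)).erase m).erase b, (X - Polynomial.C (c x₀ h a))) *
          Polynomial.derivative (X - Polynomial.C (c x₀ h b))) =
      ∏ a ∈ ((Finset.range (n+1)).erase m).erase b, (c x₀ h m - c x₀ h a) := by
    intro b _
    rw [Polynomial.eval_mul, Polynomial.derivative_X_sub_C, Polynomial.eval_one, mul_one,
      Polynomial.eval_prod]
    exact Finset.prod_congr rfl fun a _ => by simp
  rw [Finset.sum_congr rfl hterm]
  have hsub_ne : ∀ b ∈ (Finset.range (n+1)).erase m, c x₀ h m - c x₀ h b ≠ 0 := by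
    intro b hb
    rw [c_sub]
    refine mul_ne_zero ?_ hh.ne'
    have hbm : b ≠ m := Finset.ne_of_mem_erase hb
    have : (m : ℝ) ≠ (b : ℝ) := by exact_mod_cast hbm.symm
    intro hcon
    exact this (sub_eq_zero.mp hcon)
  have hval : ∀ b ∈ (Finset.range (n+1)).erase m,
      ∏ a ∈ ((Finset.range (n+1)).erase m).erase b, (c x₀ h m - c x₀ h a) =
        D n x₀ h m * (c x₀ h m - c x₀ h b)⁻¹ := by
    intro b hb
    have hDm : (c x₀ h m - c x₀ h b) *
        ∏ a ∈ ((Finset.range (n+1)).erase m).erase b, (c x₀ h m - c x₀ h a) = D n x₀ h m := by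
      unfold D; exact Finset.mul_prod_erase _ (fun a => c x₀ h m - c x₀ h a) hb
    rw [← hDm, mul_comm (c x₀ h m - c x₀ h b), mul_assoc,
      mul_inv_cancel₀ (hsub_ne b hb), mul_one]
  rw [Finset.sum_congr rfl hval]
  refine Finset.sum_involution (fun b _ => n - b) ?_ ?_ ?_ ?_
  · intro b hb
    beta_reduce
    have hbr : b ∈ Finset.range (n+1) := Finset.mem_of_mem_erase hb
    have hble : b ≤ n := by simpa [Nat.lt_succ_iff] using Finset.mem_range.mp hbr
    have hcast : ((n - b : ℕ) : ℝ) = (n : ℝ) - b := by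
      rw [Nat.cast_sub hble]
    have hkey : c x₀ h m - c x₀ h (n - b) = -(c x₀ h m - c x₀ h b) := by
      rw [c_sub, c_sub, hcast]
      have hn2 : (n : ℝ) = (m : ℝ) + m := by exact_mod_cast hm2
      rw [hn2]; ring
    rw [hkey, inv_neg]
    ring
  · intro b hb _
    beta_reduce
    have hbr := Finset.mem_range.mp (Finset.mem_of_mem_erase hb)
    have hbm := Finset.ne_of_mem_erase hb
    omega
  · intro b hb
    beta_reduce
    have hbr := Finset.mem_range.mp (Finset.mem_of_mem_erase hb)
    have hbm := Finset.ne_of_mem_erase hb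
    refine Finset.mem_erase.mpr ⟨by omega, Finset.mem_range.mpr (by omega)⟩
  · intro b hb
    beta_reduce
    have hbr := Finset.mem_range.mp (Finset.mem_of_mem_erase hb)
    omega

lemma abs_prod_centered (m : ℕ) (hm : m < n+1) :
    |∏ i ∈ (Finset.range (n+1)).erase m, ((m:ℝ) - (i:ℝ))| =
      ((m.factorial * (n - m).factorial : ℕ) : ℝ) := by
  have hsplit : (Finset.range (n+1)).erase m = Finset.range m ∪ Finset.Ico (m+1) (n+1) := by
    ext a
    simp only [Finset.mem_erase, Finset.mem_range, Finset.mem_union, Finset.mem_Ico]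
    omega
  have hdisj : Disjoint (Finset.range m) (Finset.Ico (m+1) (n+1)) := by
    rw [Finset.disjoint_left]
    intro a ha ha'
    rw [Finset.mem_range] at ha
    rw [Finset.mem_Ico] at ha'
    omega
  rw [Finset.abs_prod, hsplit, Finset.prod_union hdisj]
  have h1 : ∏ i ∈ Finset.range m, |(m:ℝ) - (i:ℝ)| = (m.factorial : ℝ) := by
    have hc : ∀ i ∈ Finset.range m, |(m:ℝ) - (i:ℝ)| = ((m - i : ℕ) : ℝ) := by
      intro i hi
      have hi' : i < m := Finset.mem_range.mp hi
      have : (i:ℝ) < (m:ℝ) := by exact_mod_cast hi'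
      rw [Nat.cast_sub hi'.le, abs_of_pos (by linarith)]
    rw [Finset.prod_congr rfl hc, ← Nat.cast_prod, ← Nat.descFactorial_eq_prod_range,
      Nat.descFactorial_self]
  have h2 : ∏ i ∈ Finset.Ico (m+1) (n+1), |(m:ℝ) - (i:ℝ)| = ((n - m).factorial : ℝ) := by
    have hc : ∀ i ∈ Finset.Ico (m+1) (n+1), |(m:ℝ) - (i:ℝ)| = ((i - m : ℕ) : ℝ) := by
      intro i hi
      have hi' : m < i := (Finset.mem_Ico.mp hi).1
      have : (m:ℝ) < (i:ℝ) := by exact_mod_cast hi'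
      rw [abs_sub_comm, Nat.cast_sub hi'.le, abs_of_pos (by linarith)]
    rw [Finset.prod_congr rfl hc, ← Nat.cast_prod, Finset.prod_Ico_eq_prod_range]
    have he : ∀ j ∈ Finset.range (n+1-(m+1)), m + 1 + j - m = j + 1 := by intro j _; omega
    rw [Finset.prod_congr rfl he, show n+1-(m+1) = n - m by omega]
    norm_cast
    induction (n - m) with
    | zero => simp
    | succ t iht => rw [Finset.prod_range_succ, iht, Nat.factorial_succ]; ring
  rw [h1, h2, Nat.cast_mul]

end CFD

namespace CFD
open Finset Polynomial
variable (n : ℕ) (x₀ h : ℝ)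

lemma noise_bound (hn : Even n) (hpos : 0 < n) (hh : 0 < h) (e : ℝ → ℝ) (ε : ℝ)
    (he : ∀ x, |e x| ≤ ε) :
    |deriv (lagrangeInterp n x₀ h e) (c x₀ h (n/2))| ≤
      (ε / h) * ∑ k ∈ (Finset.range (n+1)).erase (n/2),
        |∏ i ∈ ((Finset.range (n+1)).erase k).erase (n/2), (((n/2 : ℕ):ℝ) - (i:ℝ))| /
          |∏ i ∈ (Finset.range (n+1)).erase k, ((k:ℝ) - (i:ℝ))| := by
  set m := n / 2 with hm
  have hmmem : m ∈ Finset.range (n+1) := Finset.mem_range.mpr (by omega)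
  have hε : 0 ≤ ε := le_trans (abs_nonneg _) (he 0)
  rw [interp_eq]
  rw [show deriv (fun x => (P n x₀ h e).eval x) (c x₀ h m)
      = (Polynomial.derivative (P n x₀ h e)).eval (c x₀ h m) from Polynomial.deriv _]
  unfold P
  rw [Polynomial.derivative_sum, Polynomial.eval_finset_sum]
  have hterm : ∀ k ∈ Finset.range (n+1),
      (Polynomial.derivative
          (Polynomial.C (e (c x₀ h k) / D n x₀ h k) * N n x₀ h k)).eval (c x₀ h m)
        = (e (c x₀ h k) / D n x₀ h k) *
            (Polynomial.derivative (N n x₀ h k)).eval (c x₀ h m) := by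
    intro k _
    rw [Polynomial.derivative_C_mul, Polynomial.eval_mul, Polynomial.eval_C]
  rw [Finset.sum_congr rfl hterm]
  rw [← Finset.add_sum_erase _ _ hmmem]
  rw [eval_derivative_N_self n x₀ h hh hn hpos, mul_zero, zero_add]
  refine le_trans (Finset.abs_sum_le_sum_abs _ _) ?_
  rw [Finset.mul_sum]
  refine Finset.sum_le_sum ?_
  intro k hk
  have hkr : k ∈ Finset.range (n+1) := Finset.mem_of_mem_erase hk
  have hkm : k ≠ m := Finset.ne_of_mem_erase hk
  have hmek : m ∈ (Finset.range (n+1)).erase k := Finset.mem_erase.mpr ⟨Ne.symm hkm, hmmem⟩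
  have hev := eval_derivative_N_ne n x₀ h k m hmmem (Ne.symm hkm)
  have hcard : (((Finset.range (n+1)).erase k).erase m).card = n - 1 := by
    rw [Finset.card_erase_of_mem hmek, Finset.card_erase_of_mem hkr, Finset.card_range]
    omega
  have habs : |(Polynomial.derivative (N n x₀ h k)).eval (c x₀ h m)|
      = h^(n-1) * |∏ i ∈ ((Finset.range (n+1)).erase k).erase m, ((m:ℝ) - (i:ℝ))| := by
    rw [hev]
    have hfac : ∏ a ∈ ((Finset.range (n+1)).erase k).erase m, (c x₀ h m - c x₀ h a)
        = h^(n-1) * ∏ a ∈ ((Finset.range (n+1)).erase k).erase m, ((m:ℝ) - (a:ℝ)) := by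
      rw [show h ^ (n-1) = ∏ _a ∈ ((Finset.range (n+1)).erase k).erase m, h by
          rw [Finset.prod_const, hcard], ← Finset.prod_mul_distrib]
      exact Finset.prod_congr rfl fun a _ => by rw [c_sub]; ring
    rw [hfac, abs_mul, abs_of_pos (pow_pos hh _)]
  have hDabs : |D n x₀ h k| = h^n * |∏ i ∈ (Finset.range (n+1)).erase k, ((k:ℝ) - (i:ℝ))| := by
    rw [D_eq n x₀ h k hkr, abs_mul, abs_of_pos (pow_pos hh _)]
  rw [abs_mul, abs_div, habs, hDabs]
  have hBpos : 0 < |∏ i ∈ (Finset.range (n+1)).erase k, ((k:ℝ) - (i:ℝ))| :=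
    abs_pos.mpr (prod_sub_ne_zero n k)
  have hhn : h^n = h^(n-1) * h := by
    rw [← pow_succ]; congr 1; omega
  have hee : |e (c x₀ h k)| ≤ ε := he _
  set A := |∏ i ∈ ((Finset.range (n+1)).erase k).erase m, ((m:ℝ) - (i:ℝ))| with hA
  set B := |∏ i ∈ (Finset.range (n+1)).erase k, ((k:ℝ) - (i:ℝ))| with hB
  rw [hhn]
  have h1 : h ≠ 0 := hh.ne'
  have h2 : h^(n-1) ≠ 0 := pow_ne_zero _ hh.ne'
  have h3 : B ≠ 0 := hBpos.ne'
  have heq : |e (c x₀ h k)| / (h^(n-1) * h * B) * (h^(n-1) * A)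
      = |e (c x₀ h k)| * (A / (h * B)) := by
    field_simp
  rw [heq]
  have heq2 : ε / h * (A / B) = ε * (A / (h * B)) := by
    field_simp
  rw [heq2]
  have hApos : 0 ≤ A := abs_nonneg _
  exact mul_le_mul_of_nonneg_right hee (by positivity)

lemma det_bound (hn : Even n) (hpos : 0 < n) (hh : 0 < h) (u : ℝ → ℝ) (Cu : ℝ)
    (hu : ContDiff ℝ (n+1) u)
    (hbound : ∀ x, |iteratedDeriv (n + 1) u x| ≤ Cu) :
    |deriv u (c x₀ h (n/2)) - deriv (lagrangeInterp n x₀ h u) (c x₀ h (n/2))| ≤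
      h ^ n * Cu * ((n/2).factorial : ℝ)^2 / ((n + 1).factorial : ℝ) := by
  obtain ⟨r, hr⟩ := hn
  set m := n / 2 with hm
  have hm2 : n = m + m := by omega
  have hmmem : m ∈ Finset.range (n+1) := Finset.mem_range.mpr (by omega)
  have hDne : D n x₀ h m ≠ 0 := D_ne_zero n x₀ h hh m hmmem
  set lam := (deriv u (c x₀ h m) -
    (Polynomial.derivative (P n x₀ h u)).eval (c x₀ h m)) / D n x₀ h m with hlam
  set Q : ℝ[X] := P n x₀ h u + Polynomial.C lam * W n x₀ h with hQ
  set ψ : ℝ → ℝ := fun x => u x - Q.eval x with hψ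
  have hψCD : ContDiff ℝ (n+1) ψ := hu.sub (poly_contDiff _ _)
  have hudiff : Differentiable ℝ u := by
    apply hu.differentiable
    simp
  have hψzero : ∀ j ∈ Finset.range (n+1), ψ (c x₀ h j) = 0 := by
    intro j hj
    simp only [hψ, hQ, Polynomial.eval_add, Polynomial.eval_mul, Polynomial.eval_C]
    rw [eval_P_node n x₀ h hh u j hj, eval_W_node n x₀ h j hj, mul_zero, add_zero, sub_self]
  have hψderiv : ∀ x, deriv ψ x = deriv u x - (Polynomial.derivative Q).eval x := by
    intro x
    rw [hψ]
    rw [deriv_fun_sub (hudiff x) (Polynomial.differentiableAt _)]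
    rw [Polynomial.deriv]
  have hψ'm : deriv ψ (c x₀ h m) = 0 := by
    rw [hψderiv, hQ, Polynomial.derivative_add, Polynomial.derivative_C_mul,
      Polynomial.eval_add, Polynomial.eval_mul, Polynomial.eval_C,
      eval_derivative_W n x₀ h m hmmem, hlam, div_mul_cancel₀ _ hDne]
    ring
  have hcmono : ∀ i j : ℕ, i < j → c x₀ h i < c x₀ h j := by
    intro i j hij
    have hc := c_sub x₀ h j i
    have hij' : (i:ℝ) < j := by exact_mod_cast hij
    nlinarith
  have key : ∀ i, i < n → ∃ z, z ∈ Set.Ioo (c x₀ h i) (c x₀ h (i+1)) ∧ deriv ψ z = 0 := by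
    intro i hi
    obtain ⟨z, hz, hz0⟩ := exists_deriv_eq_zero (hcmono i (i+1) (by omega))
      hψCD.continuous.continuousOn
      (by rw [hψzero i (Finset.mem_range.mpr (by omega)),
        hψzero (i+1) (Finset.mem_range.mpr (by omega))])
    exact ⟨z, hz, hz0⟩
  choose z hzIoo hz0 using fun i (hi : i < n) => key i hi
  set Z : ℕ → ℝ := fun i => if hi : i < n then z i hi else 0 with hZ
  have hZmem : ∀ i (hi : i < n), Z i ∈ Set.Ioo (c x₀ h i) (c x₀ h (i+1)) := by
    intro i hi; simp only [hZ, dif_pos hi]; exact hzIoo i hi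
  have hZzero : ∀ i (hi : i < n), deriv ψ (Z i) = 0 := by
    intro i hi; simp only [hZ, dif_pos hi]; exact hz0 i hi
  have hle_c : ∀ p q : ℕ, p ≤ q → c x₀ h p ≤ c x₀ h q := by
    intro p q hpq
    rcases eq_or_lt_of_le hpq with hE | hL
    · rw [hE]
    · exact (hcmono _ _ hL).le
  have hcm_ne : ∀ i, i < n → Z i ≠ c x₀ h m := by
    intro i hi
    rcases lt_or_ge i m with hlt | hge
    · exact ne_of_lt (lt_of_lt_of_le (hZmem i hi).2 (hle_c (i+1) m (by omega)))
    · exact (lt_of_le_of_lt (hle_c m i hge) (hZmem i hi).1).ne'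
  have hZinj : Set.InjOn Z (Finset.range n : Set ℕ) := by
    intro a ha b hb hab
    simp only [Finset.coe_range, Set.mem_Iio] at ha hb
    by_contra hne
    have hmono : ∀ p q : ℕ, p < q → q < n → Z p < Z q := by
      intro p q hpq hq
      calc Z p < c x₀ h (p+1) := (hZmem p (by omega)).2
        _ ≤ c x₀ h q := hle_c _ _ (by omega)
        _ < Z q := (hZmem q hq).1
    rcases lt_or_gt_of_ne hne with hlt | hgt
    · exact absurd hab (hmono a b hlt hb).ne
    · exact absurd hab.symm (hmono b a hgt ha).ne
  set s : Finset ℝ := insert (c x₀ h m) ((Finset.range n).image Z) with hs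
  have hnotmem : c x₀ h m ∉ (Finset.range n).image Z := by
    intro hmem
    obtain ⟨i, hi, hEq⟩ := Finset.mem_image.mp hmem
    exact hcm_ne i (Finset.mem_range.mp hi) hEq
  have hcard : n < s.card := by
    rw [hs, Finset.card_insert_of_notMem hnotmem,
      Finset.card_image_of_injOn hZinj, Finset.card_range]
    omega
  have hψ'CD : ContDiff ℝ n (deriv ψ) := by
    have hψCD' := hψCD
    rw [contDiff_succ_iff_deriv] at hψCD'
    exact hψCD'.2.2
  obtain ⟨ξ, hξ⟩ := iterated_rolle n (deriv ψ) hψ'CD s hcard (by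
    intro x hx
    rw [hs] at hx
    rcases Finset.mem_insert.mp hx with hE | hIm
    · rw [hE]; exact hψ'm
    · obtain ⟨i, hi, rfl⟩ := Finset.mem_image.mp hIm
      exact hZzero i (Finset.mem_range.mp hi))
  have hit : iteratedDeriv (n+1) ψ ξ = 0 := by rw [iteratedDeriv_succ']; exact hξ
  have hsplit : iteratedDeriv (n+1) ψ ξ =
      iteratedDeriv (n+1) u ξ - iteratedDeriv (n+1) (fun x => Q.eval x) ξ :=
    my_iteratedDeriv_sub hu (poly_contDiff _ _) ξ
  have hQiter : iteratedDeriv (n+1) (fun x => Q.eval x) ξ = lam * ((n+1).factorial : ℝ) := by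
    rw [iteratedDeriv_polyeval, hQ]
    rw [iterate_deriv_add,
      Polynomial.iterate_derivative_eq_zero (lt_of_le_of_lt (natDegree_P_le n x₀ h u) (by omega)),
      Polynomial.iterate_derivative_C_mul, iterate_derivative_W]
    simp
  have hlameq : iteratedDeriv (n+1) u ξ = lam * ((n+1).factorial : ℝ) := by
    have h0 := hsplit
    rw [hit, hQiter] at h0
    linarith
  have hfacpos : (0:ℝ) < ((n+1).factorial : ℝ) := by exact_mod_cast (n+1).factorial_pos
  have hlamabs : |lam| ≤ Cu / ((n+1).factorial : ℝ) := by
    rw [le_div_iff₀ hfacpos]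
    calc |lam| * ((n+1).factorial:ℝ) = |lam * ((n+1).factorial:ℝ)| := by
          rw [abs_mul, abs_of_pos hfacpos]
      _ = |iteratedDeriv (n+1) u ξ| := by rw [hlameq]
      _ ≤ Cu := hbound ξ
  have hdiff_eq : deriv u (c x₀ h m) - deriv (lagrangeInterp n x₀ h u) (c x₀ h m) =
      lam * D n x₀ h m := by
    rw [interp_eq]
    rw [show deriv (fun x => (P n x₀ h u).eval x) (c x₀ h m)
      = (Polynomial.derivative (P n x₀ h u)).eval (c x₀ h m) from Polynomial.deriv _]
    rw [hlam, div_mul_cancel₀ _ hDne]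
  rw [hdiff_eq, abs_mul]
  have hDabs : |D n x₀ h m| = h^n * ((m.factorial * (n-m).factorial : ℕ):ℝ) := by
    rw [D_eq n x₀ h m hmmem, abs_mul, abs_of_pos (pow_pos hh _),
      abs_prod_centered n m (by omega)]
  rw [hDabs, show n - m = m by omega]
  have hmm : ((m.factorial * m.factorial : ℕ):ℝ) = ((m.factorial : ℕ):ℝ)^2 := by
    push_cast; ring
  rw [hmm]
  calc |lam| * (h^n * ((m.factorial : ℕ):ℝ)^2)
      ≤ (Cu / ((n+1).factorial : ℝ)) * (h^n * ((m.factorial : ℕ):ℝ)^2) :=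
        mul_le_mul_of_nonneg_right hlamabs (by positivity)
    _ = h ^ n * Cu * ((m.factorial : ℕ):ℝ)^2 / ((n+1).factorial : ℝ) := by ring

end CFD

/-- Total error bound `e_fd` for the order-`n` central finite-difference approximation of
the first derivative computed from noisy data `ũ = u + e`:
`|u'(x_{n/2}) − p_n'(ũ, x_{n/2})| ≤ hⁿ · C_u · ((n/2)!)² / (n+1)!
  + (ε/h) · Σ_{k ≠ n/2} |Π_{i ≠ k, n/2} (n/2 − i)| / |Π_{i ≠ k} (k − i)|`. -/
theorem central_fd_first_derivative_noisy_error (n : ℕ) (hn : Even n) (hpos : 0 < n)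
    (x₀ h Cu ε : ℝ) (hh : 0 < h) (u e : ℝ → ℝ)
    (hu : ContDiff ℝ (n + 1) u)
    (hbound : ∀ x, |iteratedDeriv (n + 1) u x| ≤ Cu)
    (he : ∀ x, |e x| < ε) :
    |deriv u (x₀ + ((n / 2 : ℕ) : ℝ) * h) -
        deriv (lagrangeInterp n x₀ h (u + e)) (x₀ + ((n / 2 : ℕ) : ℝ) * h)| ≤
      h ^ n * Cu * ((n / 2).factorial : ℝ) ^ 2 / ((n + 1).factorial : ℝ) +
        (ε / h) * ∑ k ∈ (Finset.range (n + 1)).erase (n / 2),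
          |∏ i ∈ ((Finset.range (n + 1)).erase k).erase (n / 2),
              (((n / 2 : ℕ) : ℝ) - (i : ℝ))| /
            |∏ i ∈ (Finset.range (n + 1)).erase k, ((k : ℝ) - (i : ℝ))| := by

  have hsum : lagrangeInterp n x₀ h (u + e) =
      fun x => lagrangeInterp n x₀ h u x + lagrangeInterp n x₀ h e x := by
    funext x
    unfold lagrangeInterp
    rw [← Finset.sum_add_distrib]
    refine Finset.sum_congr rfl fun k _ => ?_
    show (u + e) _ * _ = _
    rw [Pi.add_apply]; ring
  have hpt : x₀ + ((n / 2 : ℕ) : ℝ) * h = CFD.c x₀ h (n/2) := rfl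
  rw [hsum]
  have hd1 : DifferentiableAt ℝ (lagrangeInterp n x₀ h u) (x₀ + ((n / 2 : ℕ) : ℝ) * h) := by
    rw [CFD.interp_eq]
    exact Polynomial.differentiableAt _
  have hd2 : DifferentiableAt ℝ (lagrangeInterp n x₀ h e) (x₀ + ((n / 2 : ℕ) : ℝ) * h) := by
    rw [CFD.interp_eq]
    exact Polynomial.differentiableAt _
  rw [deriv_fun_add hd1 hd2, hpt]
  have key1 := CFD.det_bound n x₀ h hn hpos hh u Cu hu hbound
  have key2 := CFD.noise_bound n x₀ h hn hpos hh e ε (fun x => (he x).le)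
  have tri : ∀ a b c : ℝ, |a - (b + c)| ≤ |a - b| + |c| := by
    intro a b c
    calc |a - (b+c)| = |(a - b) + (-c)| := by rw [show a - (b+c) = (a-b) + (-c) by ring]
      _ ≤ |a - b| + |-c| := abs_add_le _ _
      _ = |a - b| + |c| := by rw [abs_neg]
  exact le_trans (tri _ _ _) (add_le_add key1 key2)
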